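/- Consider Algorithm 1 applied to the convex program min{f(x) : g_k(x) ≤ 0 ∀k ∈ {1,…,m}, x ∈ 𝒳} with parameter α > β²/2, where β is the Lipschitz modulus of g on 𝒳. Let x* ∈ 𝒳 be an optimal solution and suppose λ* ∈ ℝᵐ is a Lagrange multiplier vector attaining strong duality (λ*_k ≥ 0 for all k and f(x*) ≤ f(x) + ∑_k λ*_k g_k(x) for all x ∈ 𝒳). Then for all t ≥ 1 and all k ∈ {1,…,m}, the running average x̄(t) = (1/t)∑_{τ=0}^{t−1} x(τ) satisfies g_k(x̄(t)) ≤ (1/t)·( 2‖λ*‖ + √(2α)·‖x* − x(−1)‖ + √(α/(α − β²/2))·‖g(x*)‖ ). -/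

import Mathlib

/-!
The queue `Q` dominates the running sums of the constraint values, so by Jensen it suffices to
bound `‖Q t‖`. Each iterate minimises a `2α`-strongly convex function, which gives a three-point
inequality; combined with the drift `‖Q (t+1)‖² - ‖Q t‖²` and the Lipschitz bound `β² ≤ 2α`, it
bounds `f (x t) - f x*` by the decrease `V t - V (t+1)` of the potential
`V t = ‖Q t‖² / 2 + α ‖x* - x (t-1)‖² - ‖g (x (t-1))‖² / 2`. Telescoping and bounding
`∑ f (x τ)` from below by strong duality leaves a quadratic inequality in `‖Q t‖`.
-/

open scoped RealInnerProductSpace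
open Filter Topology Finset

theorem sq_max_neg_add_le (q a : ℝ) : max (-a) (q + a) ^ 2 ≤ q ^ 2 + 2 * q * a + 2 * a ^ 2 := by
  rcases max_cases (-a) (q + a) with ⟨h, -⟩ | ⟨h, -⟩ <;> rw [h] <;> nlinarith [sq_nonneg (q + a)]

theorem le_two_mul_add_add_of_sq_le {q L u w : ℝ} (hL : 0 ≤ L) (hu : 0 ≤ u) (hw : 0 ≤ w)
    (h : q ^ 2 ≤ 2 * L * q + u ^ 2 + w ^ 2) : q ≤ 2 * L + u + w := by
  have hsq : (q - L) ^ 2 ≤ (L + u + w) ^ 2 := by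
    nlinarith [mul_nonneg hL hu, mul_nonneg hL hw, mul_nonneg hu hw]
  linarith [(abs_le_of_sq_le_sq' hsq (by positivity)).2]

theorem sq_add_mul_div_two_sub_le {α β : ℝ} (hα : β ^ 2 / 2 < α) (a r : ℝ) :
    (a + β * r) ^ 2 / 2 - α * r ^ 2 ≤ α / (α - β ^ 2 / 2) * a ^ 2 / 2 := by
  have hpos : 0 < α - β ^ 2 / 2 := by linarith
  rw [div_mul_eq_mul_div, div_div, le_div_iff₀ (by positivity)]
  nlinarith [sq_nonneg ((α - β ^ 2 / 2) * r - β / 2 * a)]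

theorem sum_range_add_le_of_add_succ_le {a V : ℕ → ℝ} {b : ℝ}
    (h : ∀ τ, a τ + V (τ + 1) ≤ b + V τ) (t : ℕ) : ∑ τ ∈ range t, a τ + V t ≤ t * b + V 0 := by
  induction t with
  | zero => simp
  | succ t ih =>
    rw [sum_range_succ]
    push_cast
    linarith [h t]

theorem sum_range_le_queue {q a : ℕ → ℝ} (h₀ : 0 ≤ q 0)
    (hq : ∀ t, q (t + 1) = max (-a t) (q t + a t)) (t : ℕ) : ∑ τ ∈ range t, a τ ≤ q t := by
  induction t with
  | zero => simpa using h₀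
  | succ t ih =>
    rw [sum_range_succ, hq]
    exact le_max_of_le_right (by linarith)

theorem forall_nat_cast_sub_one {P : ℕ → ℤ → Prop} (h₀ : P 0 (-1)) (hs : ∀ t : ℕ, P (t + 1) t)
    (t : ℕ) : P t (t - 1) := by
  cases t with
  | zero => simpa using h₀
  | succ t => simpa using hs t

theorem EuclideanSpace.real_inner_eq_sum_mul {ι : Type*} [Fintype ι] (v w : EuclideanSpace ℝ ι) :
    ⟪v, w⟫ = ∑ k, v k * w k := by
  simp [PiLp.inner_apply, mul_comm]

theorem EuclideanSpace.norm_le_norm_of_forall_abs_le {ι : Type*} [Fintype ι]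
    {u v : EuclideanSpace ℝ ι} (h : ∀ k, |u k| ≤ |v k|) : ‖u‖ ≤ ‖v‖ := by
  simp only [EuclideanSpace.norm_eq, Real.norm_eq_abs]
  exact Real.sqrt_le_sqrt (sum_le_sum fun k _ => pow_le_pow_left₀ (abs_nonneg _) (h k) 2)

theorem EuclideanSpace.norm_sq_le_of_forall_eq_max {ι : Type*} [Fintype ι]
    {q a q' : EuclideanSpace ℝ ι} (h : ∀ k, q' k = max (-a k) (q k + a k)) :
    ‖q'‖ ^ 2 ≤ ‖q‖ ^ 2 + 2 * ⟪q, a⟫ + 2 * ‖a‖ ^ 2 := by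
  simp only [EuclideanSpace.real_norm_sq_eq, EuclideanSpace.real_inner_eq_sum_mul, mul_sum,
    ← sum_add_distrib, h]
  exact sum_le_sum fun k _ => by linarith [sq_max_neg_add_le (q k) (a k)]

theorem norm_smul_add_smul_sub_sq {E : Type*} [NormedAddCommGroup E] [InnerProductSpace ℝ E]
    (a b c : E) (θ : ℝ) :
    ‖(1 - θ) • a + θ • b - c‖ ^ 2 =
      (1 - θ) * ‖a - c‖ ^ 2 + θ * ‖b - c‖ ^ 2 - θ * (1 - θ) * ‖a - b‖ ^ 2 := by
  have h₁ : (1 - θ) • a + θ • b - c = (1 - θ) • (a - c) + θ • (b - c) := by module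
  have h₂ : a - b = (a - c) - (b - c) := by abel
  rw [h₁, h₂, norm_add_sq_real, norm_sub_sq_real (a - c) (b - c), norm_smul, norm_smul,
    inner_smul_left, inner_smul_right]
  simp only [Real.norm_eq_abs, conj_trivial]
  rw [mul_pow, mul_pow, sq_abs, sq_abs]
  ring

theorem half_sq_norm_sub_le_of_lipschitz {E F : Type*} [SeminormedAddCommGroup E]
    [SeminormedAddCommGroup F] {g : E → F}
    {α β : ℝ} (hα : β ^ 2 / 2 < α) {y xs : E} (hLip : ‖g y - g xs‖ ≤ β * ‖y - xs‖) :
    ‖g y‖ ^ 2 / 2 - α * ‖xs - y‖ ^ 2 ≤ α / (α - β ^ 2 / 2) * ‖g xs‖ ^ 2 / 2 := by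
  have hle : ‖g y‖ ≤ ‖g xs‖ + β * ‖xs - y‖ := by
    rw [norm_sub_rev xs]
    linarith [norm_sub_norm_le (g y) (g xs)]
  have := sq_add_mul_div_two_sub_le hα ‖g xs‖ ‖xs - y‖
  have := pow_le_pow_left₀ (norm_nonneg _) hle 2
  linarith

theorem convexOn_inner_of_nonneg {E ι : Type*} [AddCommGroup E] [Module ℝ E] [Fintype ι]
    {X : Set E} (hX : Convex ℝ X) {g : E → EuclideanSpace ℝ ι}
    (hg : ∀ k, ConvexOn ℝ X fun z => g z k) {v : EuclideanSpace ℝ ι} (hv : ∀ k, 0 ≤ v k) :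
    ConvexOn ℝ X fun z => ⟪v, g z⟫ := by
  have h : (fun z => ⟪v, g z⟫) = ∑ k, fun z => v k • g z k := by
    ext z
    simp [EuclideanSpace.real_inner_eq_sum_mul]
  rw [h]
  exact sum_induction _ (ConvexOn ℝ X) (fun _ _ => ConvexOn.add) (convexOn_const 0 hX)
    fun k _ => (hg k).smul (hv k)

theorem ConvexOn.map_inv_card_smul_sum_le {E ι : Type*} [AddCommGroup E] [Module ℝ E]
    {X : Set E} {φ : E → ℝ} (hφ : ConvexOn ℝ X φ) {s : Finset ι} (hs : s.Nonempty) {x : ι → E}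
    (hx : ∀ i ∈ s, x i ∈ X) :
    φ ((#s : ℝ)⁻¹ • ∑ i ∈ s, x i) ≤ (#s : ℝ)⁻¹ * ∑ i ∈ s, φ (x i) := by
  rw [smul_sum, mul_sum]
  refine hφ.map_sum_le (fun _ _ => by positivity) ?_ hx
  simp [hs.card_ne_zero]

theorem ConvexOn.add_sq_norm_sub_le_of_isMinOn {E : Type*} [NormedAddCommGroup E]
    [InnerProductSpace ℝ E] {X : Set E} {φ : E → ℝ} (hφ : ConvexOn ℝ X φ)
    {α : ℝ} {x y z : E} (hx : x ∈ X) (hz : z ∈ X)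
    (hmin : IsMinOn (fun w => φ w + α * ‖w - y‖ ^ 2) X x) :
    φ x + α * ‖x - y‖ ^ 2 + α * ‖z - x‖ ^ 2 ≤ φ z + α * ‖z - y‖ ^ 2 := by
  have hθ : ∀ θ ∈ Set.Ioo (0 : ℝ) 1,
      φ x + α * ‖x - y‖ ^ 2 + (1 - θ) * (α * ‖z - x‖ ^ 2) ≤ φ z + α * ‖z - y‖ ^ 2 := by
    rintro θ ⟨hθ₀, hθ₁⟩
    have hθ₁' : 0 ≤ 1 - θ := sub_nonneg.2 hθ₁.le
    have hle := isMinOn_iff.1 hmin _ (hφ.1 hx hz hθ₁' hθ₀.le (sub_add_cancel 1 θ))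
    have hconv := hφ.2 hx hz hθ₁' hθ₀.le (sub_add_cancel 1 θ)
    simp only [smul_eq_mul] at hconv
    rw [norm_smul_add_smul_sub_sq, norm_sub_rev x z] at hle
    refine le_of_mul_le_mul_left ?_ hθ₀
    linarith
  have hlim : Tendsto (fun θ : ℝ => φ x + α * ‖x - y‖ ^ 2 + (1 - θ) * (α * ‖z - x‖ ^ 2))
      (𝓝[>] 0) (𝓝 (φ x + α * ‖x - y‖ ^ 2 + α * ‖z - x‖ ^ 2)) := by
    refine tendsto_nhdsWithin_of_tendsto_nhds ?_
    have hcont :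
        Continuous fun θ : ℝ => φ x + α * ‖x - y‖ ^ 2 + (1 - θ) * (α * ‖z - x‖ ^ 2) := by
      fun_prop
    simpa using hcont.tendsto 0
  exact le_of_tendsto hlim (eventually_of_mem (Ioo_mem_nhdsGT one_pos) hθ)

theorem card_mul_le_sum_add_norm_mul_norm {E ι κ : Type*} [Fintype ι] {X : Set E} {f : E → ℝ}
    {g : E → EuclideanSpace ℝ ι} {xs : E} {lam q : EuclideanSpace ℝ ι}
    (hlam : ∀ k, 0 ≤ lam k) (hsd : ∀ z ∈ X, f xs ≤ f z + ∑ k, lam k * g z k)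
    {s : Finset κ} {x : κ → E} (hx : ∀ i ∈ s, x i ∈ X) (hq : ∀ k, ∑ i ∈ s, g (x i) k ≤ q k) :
    #s * f xs ≤ ∑ i ∈ s, f (x i) + ‖lam‖ * ‖q‖ :=
  calc #s * f xs = ∑ i ∈ s, f xs := by simp
    _ ≤ ∑ i ∈ s, (f (x i) + ∑ k, lam k * g (x i) k) := sum_le_sum fun i hi => hsd _ (hx i hi)
    _ = ∑ i ∈ s, f (x i) + ∑ k, lam k * ∑ i ∈ s, g (x i) k := by
      rw [sum_add_distrib, sum_comm]
      simp only [mul_sum]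
    _ ≤ ∑ i ∈ s, f (x i) + ∑ k, lam k * q k := by
      gcongr with k
      exacts [hlam k, hq k]
    _ = ∑ i ∈ s, f (x i) + ⟪lam, q⟫ := by rw [EuclideanSpace.real_inner_eq_sum_mul]
    _ ≤ ∑ i ∈ s, f (x i) + ‖lam‖ * ‖q‖ := by gcongr; exact real_inner_le_norm lam q

theorem drift_plus_penalty_le {E ι : Type*} [NormedAddCommGroup E] [InnerProductSpace ℝ E]
    [Fintype ι] {X : Set E} {f : E → ℝ} {g : E → EuclideanSpace ℝ ι} (hf : ConvexOn ℝ X f)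
    (hg : ∀ k, ConvexOn ℝ X fun z => g z k)
    {α β : ℝ} (hβα : β ^ 2 ≤ 2 * α) {y x xs : E} {q q' : EuclideanSpace ℝ ι}
    (hx : x ∈ X) (hxs : xs ∈ X) (hfeas : ∀ k, g xs k ≤ 0)
    (hLip : ‖g x - g y‖ ≤ β * ‖x - y‖) (hv : ∀ k, 0 ≤ q k + g y k)
    (hmin : ∀ z ∈ X, f x + ⟪q + g y, g x⟫ + α * ‖x - y‖ ^ 2 ≤
      f z + ⟪q + g y, g z⟫ + α * ‖z - y‖ ^ 2)
    (hq' : ∀ k, q' k = max (-g x k) (q k + g x k)) :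
    f x + (‖q'‖ ^ 2 / 2 + α * ‖xs - x‖ ^ 2 - ‖g x‖ ^ 2 / 2) ≤
      f xs + (‖q‖ ^ 2 / 2 + α * ‖xs - y‖ ^ 2 - ‖g y‖ ^ 2 / 2) := by
  have hv' : ∀ k, 0 ≤ (q + g y) k := by simpa using hv
  have hprox := (hf.add (convexOn_inner_of_nonneg hf.1 hg hv')).add_sq_norm_sub_le_of_isMinOn
    hx hxs (isMinOn_iff.2 hmin)
  have hpenalty : ⟪q + g y, g xs⟫ ≤ 0 := by
    rw [EuclideanSpace.real_inner_eq_sum_mul]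
    exact sum_nonpos fun k _ => mul_nonpos_of_nonneg_of_nonpos (hv' k) (hfeas k)
  have hdrift := EuclideanSpace.norm_sq_le_of_forall_eq_max hq'
  have hLip_sq : ‖g x - g y‖ ^ 2 ≤ 2 * α * ‖x - y‖ ^ 2 := by
    calc ‖g x - g y‖ ^ 2 ≤ (β * ‖x - y‖) ^ 2 := pow_le_pow_left₀ (norm_nonneg _) hLip 2
      _ = β ^ 2 * ‖x - y‖ ^ 2 := mul_pow _ _ _
      _ ≤ 2 * α * ‖x - y‖ ^ 2 := by gcongr
  simp only [Pi.add_apply] at hprox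
  linarith [inner_add_left (𝕜 := ℝ) q (g y) (g x), norm_sub_sq_real (g x) (g y),
    real_inner_comm (g x) (g y)]

structure IsAlg1Run {E ι : Type*} [NormedAddCommGroup E] [InnerProductSpace ℝ E] [Fintype ι]
    (X : Set E) (f : E → ℝ) (g : E → EuclideanSpace ℝ ι) (α : ℝ) (x : ℤ → E)
    (Q : ℕ → EuclideanSpace ℝ ι) : Prop where
  mem_init : x (-1) ∈ X
  mem : ∀ t : ℕ, x t ∈ X
  queue_zero : ∀ k, Q 0 k = max 0 (-g (x (-1)) k)
  queue_succ : ∀ (t : ℕ) k, Q (t + 1) k = max (-g (x t) k) (Q t k + g (x t) k)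
  le_of_mem : ∀ t : ℕ, ∀ z ∈ X,
    f (x t) + ⟪Q t + g (x ((t : ℤ) - 1)), g (x t)⟫ + α * ‖x t - x ((t : ℤ) - 1)‖ ^ 2 ≤
      f z + ⟪Q t + g (x ((t : ℤ) - 1)), g z⟫ + α * ‖z - x ((t : ℤ) - 1)‖ ^ 2

namespace IsAlg1Run

variable {E ι : Type*} [NormedAddCommGroup E] [InnerProductSpace ℝ E] [Fintype ι]
  {X : Set E} {f : E → ℝ} {g : E → EuclideanSpace ℝ ι} {α : ℝ} {x : ℤ → E}
  {Q : ℕ → EuclideanSpace ℝ ι}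

theorem mem_sub_one (h : IsAlg1Run X f g α x Q) (t : ℕ) : x ((t : ℤ) - 1) ∈ X :=
  forall_nat_cast_sub_one (P := fun _ i => x i ∈ X) h.mem_init h.mem t

theorem queue_add_nonneg (h : IsAlg1Run X f g α x Q) (t : ℕ) (k : ι) :
    0 ≤ Q t k + g (x ((t : ℤ) - 1)) k :=
  forall_nat_cast_sub_one (P := fun τ i => ∀ k, 0 ≤ Q τ k + g (x i) k)
    (fun k => by rw [h.queue_zero]; linarith [le_max_right 0 (-g (x (-1)) k)])
    (fun τ k => by rw [h.queue_succ]; linarith [le_max_left (-g (x τ) k) (Q τ k + g (x τ) k)])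
    t k

theorem sum_range_le_queue (h : IsAlg1Run X f g α x Q) (t : ℕ) (k : ι) :
    ∑ τ ∈ range t, g (x τ) k ≤ Q t k :=
  _root_.sum_range_le_queue (q := fun τ => Q τ k) (h.queue_zero k ▸ le_max_left _ _)
    (h.queue_succ · k) t

theorem norm_queue_zero_le (h : IsAlg1Run X f g α x Q) : ‖Q 0‖ ≤ ‖g (x (-1))‖ :=
  EuclideanSpace.norm_le_norm_of_forall_abs_le fun k => by
    rw [h.queue_zero, abs_of_nonneg (le_max_left _ _)]
    exact max_le (abs_nonneg _) (neg_le_abs _)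

theorem norm_queue_le (h : IsAlg1Run X f g α x Q) (hf : ConvexOn ℝ X f)
    (hg : ∀ k, ConvexOn ℝ X fun z => g z k) {β : ℝ}
    (hLip : ∀ u ∈ X, ∀ v ∈ X, ‖g u - g v‖ ≤ β * ‖u - v‖) (hα : β ^ 2 / 2 < α)
    {xs : E} (hxs : xs ∈ X) (hfeas : ∀ k, g xs k ≤ 0) {lam : EuclideanSpace ℝ ι}
    (hlam : ∀ k, 0 ≤ lam k) (hsd : ∀ z ∈ X, f xs ≤ f z + ∑ k, lam k * g z k) (t : ℕ) :
    ‖Q t‖ ≤ 2 * ‖lam‖ + √(2 * α) * ‖xs - x (-1)‖ + √(α / (α - β ^ 2 / 2)) * ‖g xs‖ := by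
  have hα₀ : 0 ≤ α := by nlinarith [sq_nonneg β]
  have hgap : 0 < α - β ^ 2 / 2 := by linarith
  set V : ℕ → ℝ := fun τ =>
    ‖Q τ‖ ^ 2 / 2 + α * ‖xs - x ((τ : ℤ) - 1)‖ ^ 2 - ‖g (x ((τ : ℤ) - 1))‖ ^ 2 / 2 with hV
  have hstep : ∀ τ : ℕ, f (x τ) + V (τ + 1) ≤ f xs + V τ := fun τ => by
    simpa [hV] using drift_plus_penalty_le hf hg (by linarith) (h.mem τ) hxs hfeas
      (hLip _ (h.mem τ) _ (h.mem_sub_one τ)) (h.queue_add_nonneg τ) (h.le_of_mem τ)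
      (h.queue_succ τ)
  have htele := sum_range_add_le_of_add_succ_le hstep t
  have hlow := card_mul_le_sum_add_norm_mul_norm hlam hsd (fun τ _ => h.mem τ)
    (h.sum_range_le_queue t)
  have hV₀ := pow_le_pow_left₀ (norm_nonneg _) h.norm_queue_zero_le 2
  have hVt := half_sq_norm_sub_le_of_lipschitz hα (hLip _ (h.mem_sub_one t) xs hxs)
  refine le_two_mul_add_add_of_sq_le (norm_nonneg _) (by positivity) (by positivity) ?_
  rw [mul_pow, mul_pow, Real.sq_sqrt (by positivity), Real.sq_sqrt (div_nonneg hα₀ hgap.le)]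
  simp only [hV, card_range] at htele hlow
  linarith

end IsAlg1Run

theorem alg1_constraint_violation_general
    {n m : ℕ}
    (X : Set (EuclideanSpace ℝ (Fin n)))
    (f : EuclideanSpace ℝ (Fin n) → ℝ) (hf : ConvexOn ℝ X f)
    (g : EuclideanSpace ℝ (Fin n) → EuclideanSpace ℝ (Fin m))
    (hg : ∀ k : Fin m, ConvexOn ℝ X (fun z => g z k))
    (β : ℝ) (hLip : ∀ u ∈ X, ∀ v ∈ X, ‖g u - g v‖ ≤ β * ‖u - v‖)
    (α : ℝ) (hα : β ^ 2 / 2 < α)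
    (x : ℤ → EuclideanSpace ℝ (Fin n)) (hxm1 : x (-1) ∈ X)
    (Q : ℕ → EuclideanSpace ℝ (Fin m))
    (hQ0 : ∀ k : Fin m, Q 0 k = max 0 (-(g (x (-1)) k)))
    (hxmem : ∀ t : ℕ, x t ∈ X)
    (hmin : ∀ t : ℕ, ∀ z ∈ X,
      f (x t) + ⟪Q t + g (x ((t : ℤ) - 1)), g (x t)⟫ + α * ‖x t - x ((t : ℤ) - 1)‖ ^ 2 ≤
        f z + ⟪Q t + g (x ((t : ℤ) - 1)), g z⟫ + α * ‖z - x ((t : ℤ) - 1)‖ ^ 2)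
    (hQrec : ∀ (t : ℕ) (k : Fin m),
      Q (t + 1) k = max (-(g (x t) k)) (Q t k + g (x t) k))
    (xs : EuclideanSpace ℝ (Fin n)) (hxs : xs ∈ X)
    (hfeas : ∀ k : Fin m, g xs k ≤ 0)
    (lam : EuclideanSpace ℝ (Fin m)) (hlam : ∀ k : Fin m, 0 ≤ lam k)
    (hsd : ∀ z ∈ X, f xs ≤ f z + ∑ k : Fin m, lam k * g z k)
    :
    ∀ t : ℕ, 1 ≤ t → ∀ k : Fin m, g ((t : ℝ)⁻¹ • ∑ τ ∈ Finset.range t, x τ) k ≤ (1 / t) * (2 * ‖lam‖ + Real.sqrt (2 * α) * ‖xs - x (-1)‖ + Real.sqrt (α / (α - β ^ 2 / 2)) * ‖g xs‖) := by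
  intro t ht k
  have hrun : IsAlg1Run X f g α x Q := ⟨hxm1, hxmem, hQ0, hQrec, hmin⟩
  calc g ((t : ℝ)⁻¹ • ∑ τ ∈ range t, x τ) k ≤ (t : ℝ)⁻¹ * ∑ τ ∈ range t, g (x τ) k := by
        simpa using (hg k).map_inv_card_smul_sum_le (nonempty_range_iff.2 (by omega))
          fun τ _ => hxmem τ
    _ ≤ (1 / t) * ‖Q t‖ := by
        rw [one_div]
        gcongr
        exact (hrun.sum_range_le_queue t k).trans
          ((Real.le_norm_self _).trans (PiLp.norm_apply_le _ k))
    _ ≤ _ := by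
        gcongr
        exact hrun.norm_queue_le hf hg hLip hα hxs hfeas hlam hsd t

theorem alg1_constraint_violation
    {n m : ℕ}
    (X : Set (EuclideanSpace ℝ (Fin n))) (hXconv : Convex ℝ X) (hXcl : IsClosed X)
    (f : EuclideanSpace ℝ (Fin n) → ℝ) (hf : ConvexOn ℝ X f) (hfc : ContinuousOn f X)
    (g : EuclideanSpace ℝ (Fin n) → EuclideanSpace ℝ (Fin m))
    (hg : ∀ k : Fin m, ConvexOn ℝ X (fun z => g z k))
    (β : ℝ) (hLip : ∀ u ∈ X, ∀ v ∈ X, ‖g u - g v‖ ≤ β * ‖u - v‖)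
    (α : ℝ) (hα : β ^ 2 / 2 < α)
    (x : ℤ → EuclideanSpace ℝ (Fin n)) (hxm1 : x (-1) ∈ X)
    (Q : ℕ → EuclideanSpace ℝ (Fin m))
    (hQ0 : ∀ k : Fin m, Q 0 k = max 0 (-(g (x (-1)) k)))
    (hxmem : ∀ t : ℕ, x t ∈ X)
    (hmin : ∀ t : ℕ, ∀ z ∈ X,
      f (x t) + ⟪Q t + g (x ((t : ℤ) - 1)), g (x t)⟫ + α * ‖x t - x ((t : ℤ) - 1)‖ ^ 2 ≤
        f z + ⟪Q t + g (x ((t : ℤ) - 1)), g z⟫ + α * ‖z - x ((t : ℤ) - 1)‖ ^ 2)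
    (hQrec : ∀ (t : ℕ) (k : Fin m),
      Q (t + 1) k = max (-(g (x t) k)) (Q t k + g (x t) k))
    (xs : EuclideanSpace ℝ (Fin n)) (hxs : xs ∈ X)
    (hfeas : ∀ k : Fin m, g xs k ≤ 0)
    (hopt : ∀ z ∈ X, (∀ k : Fin m, g z k ≤ 0) → f xs ≤ f z)
    (lam : EuclideanSpace ℝ (Fin m)) (hlam : ∀ k : Fin m, 0 ≤ lam k)
    (hsd : ∀ z ∈ X, f xs ≤ f z + ∑ k : Fin m, lam k * g z k)
    :
    ∀ t : ℕ, 1 ≤ t → ∀ k : Fin m, g ((t : ℝ)⁻¹ • ∑ τ ∈ Finset.range t, x τ) k ≤ (1 / t) * (2 * ‖lam‖ + Real.sqrt (2 * α) * ‖xs - x (-1)‖ + Real.sqrt (α / (α - β ^ 2 / 2)) * ‖g xs‖) :=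
  alg1_constraint_violation_general X f hf g hg β hLip α hα x hxm1 Q hQ0 hxmem hmin hQrec xs hxs
    hfeas lam hlam hsd
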